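/- arXiv:2308.06342 — 2 statements merged into one kernel-verified Lean document; each statement's English description precedes it below -/
import Mathlib

section
/- For any two probability distributions p and q on a finite set, the Kullback–Leibler divergence satisfies D_KL(p ∥ q) ≥ (1/2)·‖p − q‖₁², where ‖·‖₁ is the L1 norm (Pinsker's inequality). -/
/-!
With `x = p / q`, the summand `p log (p / q) - p + q` of the divergence is `q · klFun x`, and the
calculus inequality `3 (x - 1)² ≤ 2 (x + 2) klFun x` becomes
`3 (p - q)² ≤ 2 (p + 2q) (p log (p / q) - p + q)`.
Cauchy–Schwarz with weights `p + 2q`, which sum to `3`, then gives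
`(∑ |p - q|)² ≤ 3 · (2 / 3) · D_KL(p ‖ q)`.
-/

open Finset Real Set InformationTheory

lemma monotoneOn_add_one_mul_log_sub_two_mul_sub_one :
    MonotoneOn (fun x : ℝ => (x + 1) * log x - 2 * (x - 1)) (Ioi 0) := by
  refine monotoneOn_of_hasDerivWithinAt_nonneg (f' := fun x => log x + x⁻¹ - 1) (convex_Ioi 0)
    (by fun_prop (disch := simp_all [ne_of_gt])) (fun x hx => ?_) (fun x hx => ?_)
  all_goals rw [interior_Ioi, Set.mem_Ioi] at hx
  · refine (((((hasDerivAt_id' x).add_const 1).mul (hasDerivAt_log hx.ne')).sub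
      (((hasDerivAt_id' x).sub_const 1).const_mul 2)).congr_deriv ?_).hasDerivWithinAt
    field_simp
    ring
  · linarith [one_sub_inv_le_log_of_pos hx]

lemma hasDerivAt_klFun_mul_sub_sq {x : ℝ} (hx : x ≠ 0) :
    HasDerivAt (fun x => 2 * (x + 2) * klFun x - 3 * (x - 1) ^ 2)
      (4 * ((x + 1) * log x - 2 * (x - 1))) x := by
  refine ((((hasDerivAt_id' x).add_const 2).const_mul 2).mul (hasDerivAt_klFun hx)).sub
    ((((hasDerivAt_id' x).sub_const 1).pow 2).const_mul 3) |>.congr_deriv ?_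
  rw [klFun_apply]
  ring

lemma three_mul_sq_sub_one_le_mul_klFun {x : ℝ} (hx : 0 ≤ x) :
    3 * (x - 1) ^ 2 ≤ 2 * (x + 2) * klFun x := by
  set g : ℝ → ℝ := fun x => 2 * (x + 2) * klFun x - 3 * (x - 1) ^ 2
  have hg : ∀ x, 0 < x → HasDerivAt g (4 * ((x + 1) * log x - 2 * (x - 1))) x :=
    fun x hx => hasDerivAt_klFun_mul_sub_sq hx.ne'
  have hcont : Continuous g := by fun_prop
  -- `g' = 4 h` with `h` the monotone function above, and `h 1 = 0`.
  have hmin : IsMinOn g (Ici 0) 1 := by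
    refine isMinOn_Ici_of_deriv hcont.continuousAt hcont.continuousAt
      (fun y hy => (hg y hy.1).differentiableAt.differentiableWithinAt)
      (fun y hy => (hg y (zero_lt_one.trans hy)).differentiableAt.differentiableWithinAt)
      (fun y hy => ?_) (fun y hy => ?_)
    · rw [(hg y hy.1).deriv]
      have := monotoneOn_add_one_mul_log_sub_two_mul_sub_one hy.1 (mem_Ioi.2 one_pos) hy.2.le
      simp only [log_one, mul_zero, sub_self] at this
      linarith
    · have hy0 : (0:ℝ) < y := zero_lt_one.trans hy
      rw [(hg y hy0).deriv]
      have := monotoneOn_add_one_mul_log_sub_two_mul_sub_one (mem_Ioi.2 one_pos) hy0 (le_of_lt hy)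
      simp only [log_one, mul_zero, sub_self] at this
      linarith
  have := isMinOn_iff.mp hmin x hx
  simp only [g] at this
  linarith [klFun_one]

lemma mul_log_div_sub_add_eq_mul_klFun (p : ℝ) {q : ℝ} (hq : q ≠ 0) :
    p * log (p / q) - p + q = q * klFun (p / q) := by
  rw [klFun_apply]
  field_simp
  ring

lemma mul_log_div_sub_add_nonneg {p q : ℝ} (hp : 0 ≤ p) (hq : 0 ≤ q) (hpq : 0 < p → 0 < q) :
    0 ≤ p * log (p / q) - p + q := by
  rcases hq.eq_or_lt with rfl | hq
  · obtain rfl : p = 0 := (hp.eq_of_not_lt fun h => (hpq h).false).symm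
    simp
  · rw [mul_log_div_sub_add_eq_mul_klFun p hq.ne']
    exact mul_nonneg hq.le (klFun_nonneg (div_nonneg hp hq.le))

lemma three_mul_sq_sub_le_mul_log_div {p q : ℝ} (hp : 0 ≤ p) (hq : 0 ≤ q)
    (hpq : 0 < p → 0 < q) :
    3 * (p - q) ^ 2 ≤ 2 * (p + 2 * q) * (p * log (p / q) - p + q) := by
  rcases hq.eq_or_lt with rfl | hq
  · obtain rfl : p = 0 := (hp.eq_of_not_lt fun h => (hpq h).false).symm
    simp
  calc 3 * (p - q) ^ 2 = q ^ 2 * (3 * (p / q - 1) ^ 2) := by field_simp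
    _ ≤ q ^ 2 * (2 * (p / q + 2) * klFun (p / q)) :=
      mul_le_mul_of_nonneg_left
        (three_mul_sq_sub_one_le_mul_klFun (div_nonneg hp hq.le)) (sq_nonneg q)
    _ = 2 * (p + 2 * q) * (p * log (p / q) - p + q) := by
      rw [mul_log_div_sub_add_eq_mul_klFun p hq.ne']
      field_simp

/-- Pinsker's inequality for probability mass functions on `Fin d`. -/
theorem pinsker_inequality (d : ℕ) (p q : Fin d → ℝ)
    (hp0 : ∀ i, 0 ≤ p i) (hp1 : ∑ i, p i = 1)
    (hq0 : ∀ i, 0 ≤ q i) (hq1 : ∑ i, q i = 1)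
    (hpq : ∀ i, 0 < p i → 0 < q i) :
    (∑ i, p i * Real.log (p i / q i)) ≥ (1 / 2) * (∑ i, |p i - q i|) ^ 2 := by
  have hCS := sum_sq_le_sum_mul_sum_of_sq_le_mul univ (r := fun i => |p i - q i|)
    (f := fun i => p i + 2 * q i) (g := fun i => 2 / 3 * (p i * log (p i / q i) - p i + q i))
    (fun i _ => by linarith [hp0 i, hq0 i])
    (fun i _ => mul_nonneg (by norm_num) (mul_log_div_sub_add_nonneg (hp0 i) (hq0 i) (hpq i)))
    (fun i _ => by
      have := three_mul_sq_sub_le_mul_log_div (hp0 i) (hq0 i) (hpq i)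
      rw [sq_abs]; linarith)
  have hf : ∑ i, (p i + 2 * q i) = 3 := by
    rw [sum_add_distrib, ← mul_sum, hp1, hq1]; norm_num
  have hg : ∑ i, 2 / 3 * (p i * log (p i / q i) - p i + q i)
      = 2 / 3 * ∑ i, p i * log (p i / q i) := by
    rw [← mul_sum, sum_add_distrib, sum_sub_distrib, hp1, hq1]; ring
  rw [hf, hg] at hCS
  linarith
end

section
/- The negative entropy function φ(x) = Σᵢ xᵢ ln xᵢ on the probability simplex is 1-strongly convex with respect to the L1 norm: for all x, y in the simplex with x having strictly positive entries, φ(y) ≥ φ(x) + ⟨∇φ(x), y − x⟩ + (1/2)‖y − x‖₁². -/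
/-!
The Bregman divergence of `φ` at `x` is the Kullback–Leibler divergence `∑ yᵢ log (yᵢ / xᵢ)`, so the
claim is Pinsker's inequality. Each summand `xᵢ klFun (yᵢ / xᵢ)` is at least
`3 (yᵢ - xᵢ)² / (2 (yᵢ + 2 xᵢ))`, and Cauchy–Schwarz with the weights `yᵢ + 2 xᵢ`, whose total is `3`,
turns the sum of these bounds into `(∑ |yᵢ - xᵢ|)² / 2`.
-/

open Finset Real Set InformationTheory

lemma rat_le_log {t : ℝ} (ht : 0 < t) :
    (t - 1) * (5 * t + 1) / (2 * t * (t + 2)) ≤ log t := by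
  set g : ℝ → ℝ := fun s => log s - (s - 1) * (5 * s + 1) / (2 * s * (s + 2))
  have hg : ∀ s ∈ Ioi (0 : ℝ), HasDerivAt g ((s - 1) ^ 3 / (s ^ 2 * (s + 2) ^ 2)) s := by
    intro s (hs : 0 < s)
    have hnum : HasDerivAt (fun u : ℝ => (u - 1) * (5 * u + 1)) (10 * s - 4) s := by
      refine (((hasDerivAt_id s).sub_const 1).mul
        (((hasDerivAt_id s).const_mul 5).add_const 1)).congr_deriv ?_
      simp only [id_eq]; ring
    have hden : HasDerivAt (fun u : ℝ => 2 * u * (u + 2)) (4 * s + 4) s := by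
      refine (((hasDerivAt_id s).const_mul 2).mul ((hasDerivAt_id s).add_const 2)).congr_deriv ?_
      simp only [id_eq]; ring
    refine ((hasDerivAt_log hs.ne').sub (hnum.div hden (by positivity))).congr_deriv ?_
    field_simp
    ring
  have hdiff : DifferentiableOn ℝ g (Ioi 0) := fun s hs =>
    (hg s hs).differentiableAt.differentiableWithinAt
  have hmin : IsMinOn g (Ioi 0) 1 := by
    refine isMinOn_Ioi_of_deriv (hg 1 (Set.mem_Ioi.2 one_pos)).continuousAt
      (hdiff.mono Ioo_subset_Ioi_self) (hdiff.mono (Ioi_subset_Ioi zero_le_one)) ?_ ?_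
    · intro s hs
      rw [(hg s hs.1).deriv]
      exact div_nonpos_of_nonpos_of_nonneg
        (Odd.pow_nonpos (by decide) (by linarith [hs.2])) (by positivity)
    · intro s (hs : 1 < s)
      rw [(hg s (zero_lt_one.trans hs)).deriv]
      exact div_nonneg (pow_nonneg (by linarith) 3) (by positivity)
  have := hmin ht
  norm_num [g] at this
  linarith

lemma three_mul_sq_div_le_klFun {t : ℝ} (ht : 0 ≤ t) :
    3 * (t - 1) ^ 2 / (2 * (t + 2)) ≤ klFun t := by
  rcases ht.eq_or_lt with rfl | ht
  · norm_num [klFun_zero]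
  · have key : t * ((t - 1) * (5 * t + 1) / (2 * t * (t + 2))) =
        3 * (t - 1) ^ 2 / (2 * (t + 2)) + t - 1 := by
      field_simp
      ring
    rw [klFun_apply]
    nlinarith [mul_le_mul_of_nonneg_left (rat_le_log ht) ht.le]

lemma mul_klFun_div {x : ℝ} (hx : x ≠ 0) (y : ℝ) :
    x * klFun (y / x) = y * log y - y * log x - (y - x) := by
  rcases eq_or_ne y 0 with rfl | hy
  · simp [klFun_zero]
  · rw [klFun_apply, log_div hy hx]
    field_simp
    ring

lemma three_mul_sq_sub_div_le_mul_klFun_div {x y : ℝ} (hx : 0 < x) (hy : 0 ≤ y) :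
    3 * (y - x) ^ 2 / (2 * (y + 2 * x)) ≤ x * klFun (y / x) := by
  refine le_of_eq_of_le ?_
    (mul_le_mul_of_nonneg_left (three_mul_sq_div_le_klFun (div_nonneg hy hx.le)) hx.le)
  have : y + 2 * x ≠ 0 := by positivity
  field_simp

theorem pinsker_inequality_s1 {ι : Type*} [Fintype ι] {x y : ι → ℝ}
    (hx0 : ∀ i, 0 < x i) (hx1 : ∑ i, x i = 1) (hy0 : ∀ i, 0 ≤ y i) (hy1 : ∑ i, y i = 1) :
    (∑ i, |y i - x i|) ^ 2 ≤ 2 * ∑ i, (y i * log (y i) - y i * log (x i)) := by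
  have hpos : ∀ i, 0 < y i + 2 * x i := fun i => by linarith [hx0 i, hy0 i]
  have hmass : ∑ i, (y i + 2 * x i) = 3 := by
    rw [sum_add_distrib, ← mul_sum, hx1, hy1]; norm_num
  calc (∑ i, |y i - x i|) ^ 2 = 3 * ((∑ i, |y i - x i|) ^ 2 / ∑ i, (y i + 2 * x i)) := by
        rw [hmass]; ring
    _ ≤ 3 * ∑ i, |y i - x i| ^ 2 / (y i + 2 * x i) := by
        gcongr; exact sq_sum_div_le_sum_sq_div univ _ fun i _ => hpos i
    _ = 2 * ∑ i, 3 * (y i - x i) ^ 2 / (2 * (y i + 2 * x i)) := by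
        rw [mul_sum, mul_sum]
        refine sum_congr rfl fun i _ => ?_
        have := (hpos i).ne'
        rw [sq_abs]
        field_simp
    _ ≤ 2 * ∑ i, x i * klFun (y i / x i) := by
        gcongr with i
        exact three_mul_sq_sub_div_le_mul_klFun_div (hx0 i) (hy0 i)
    _ = 2 * ∑ i, (y i * log (y i) - y i * log (x i)) := by
        simp only [fun i => mul_klFun_div (hx0 i).ne', sum_sub_distrib, hx1, hy1, sub_self,
          sub_zero]

/-- 1-strong convexity of negative entropy w.r.t. the L1 norm on the simplex. -/
theorem negEntropy_one_strongly_convex (d : ℕ) (x y : Fin d → ℝ)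
    (hx0 : ∀ i, 0 < x i) (hx1 : ∑ i, x i = 1)
    (hy0 : ∀ i, 0 ≤ y i) (hy1 : ∑ i, y i = 1) :
    (∑ i, y i * Real.log (y i)) ≥
      (∑ i, x i * Real.log (x i)) + (∑ i, (1 + Real.log (x i)) * (y i - x i))
        + (1 / 2) * (∑ i, |y i - x i|) ^ 2 := by
  have hgrad : ∑ i, (1 + log (x i)) * (y i - x i) =
      ∑ i, y i * log (x i) - ∑ i, x i * log (x i) := by
    simp only [add_mul, one_mul, mul_sub, sum_add_distrib, sum_sub_distrib, hx1, hy1,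
      mul_comm (log _)]
    ring
  have hpinsker := pinsker_inequality_s1 hx0 hx1 hy0 hy1
  rw [sum_sub_distrib] at hpinsker
  linarith
end
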